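/- arXiv:2304.07638 — 4 statements merged into one kernel-verified Lean document; each statement's English description precedes it below -/
import Mathlib

section
/- Let 'g normalises f' mean f(y|x) = g(y|x) · (Σ_{y'} f(y'|x)) for all x, y (morphisms in Mat_{ℝ+}). If f and g are morphisms X → Y in Mat_{ℝ+} that normalise each other, then f = g. -/
open scoped NNReal

/-- `g` normalises `f` in `Mat_{ℝ≥0}`: `f(y|x) = g(y|x) · w_f(x)` where
`w_f(x) = Σ_{y'} f(y'|x)`. -/
def Normalises {X Y : Type*} [Fintype Y] (g f : X → Y → ℝ≥0) : Prop :=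
  ∀ x y, f x y = g x y * ∑ y', f x y'

/-- Antisymmetry of the normalising relation: if `f` and `g` normalise each other,
then `f = g`. -/
theorem normalises_antisymm {X Y : Type*} [Fintype Y] (f g : X → Y → ℝ≥0)
    (hgf : Normalises g f) (hfg : Normalises f g) : f = g := by
  funext x y
  set wf := ∑ y', f x y' with hwf
  set wg := ∑ y', g x y' with hwg
  have hsum : wf = wg * wf := by
    rw [hwf]
    calc ∑ y', f x y' = ∑ y', g x y' * wf :=
          Finset.sum_congr rfl fun y' _ => hgf x y'
      _ = wg * wf := by rw [← Finset.sum_mul]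
  by_cases h0 : wf = 0
  · have hf0 : f x y = 0 := by
      have := (Finset.sum_eq_zero_iff.mp h0) y (Finset.mem_univ y)
      exact this
    have hg0 : g x y = 0 := by rw [hfg x y, hf0, zero_mul]
    rw [hf0, hg0]
  · have hwg1 : wg = 1 := by
      have h : wg * wf = 1 * wf := by rw [one_mul, ← hsum]
      exact mul_right_cancel₀ h0 h
    have : g x y = f x y * wg := hfg x y
    rw [hwg1, mul_one] at this
    exact this.symm
end

section
/- Local Markov property from factorisation: let V = {X₁,…,Xₙ} be finite sets, G a DAG on indices {1,…,n}, and suppose P(x₁,…,xₙ) = ∏ᵢ cᵢ(xᵢ | pa_i) where each cᵢ is a probability channel from the product of the parents of i in G to Xᵢ. Then for each i, Xᵢ is conditionally independent of its nondescendants-excluding-parents given its parents: (Xᵢ ⫫ Nd(Xᵢ)∖Pa(Xᵢ) | Pa(Xᵢ))_P. -/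
open scoped NNReal

/-- The parents of `i` in the directed graph with edge relation `E` (an edge `j → i` is
`E j i`). -/
def parents {ι : Type*} [Fintype ι] (E : ι → ι → Prop) [DecidableRel E] (i : ι) :
    Finset ι :=
  Finset.univ.filter fun j => E j i

/-- The nondescendants of `i`: the vertices `j` with no directed path `i → ⋯ → j`
(this includes `i` itself, which is excluded separately below). -/
def nonDesc {ι : Type*} [Fintype ι] (E : ι → ι → Prop)
    [DecidableRel (Relation.TransGen E)] (i : ι) : Finset ι :=
  Finset.univ.filter fun j => ¬ Relation.TransGen E i j

/-- The marginal of `P` on the coordinates in `T`, evaluated at `v`: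
sum of `P w` over all assignments `w` agreeing with `v` on `T`. -/
noncomputable def margin {ι : Type*} [Fintype ι] [DecidableEq ι] {X : ι → Type*}
    [∀ i, Fintype (X i)] [∀ i, DecidableEq (X i)]
    (P : (∀ j, X j) → ℝ≥0) (T : Finset ι) (v : ∀ j, X j) : ℝ≥0 :=
  ∑ w : ∀ j, X j, if ∀ j ∈ T, w j = v j then P w else 0

/-!
On an ancestral set `A` (closed under taking parents) the marginal of `P` is `∏ j ∈ A, c j`:
the remaining vertices can be summed out in reverse topological order, each channel summing to
one. The nondescendants `Nd` of `i` form an ancestral set, and so does `Nd \ {i}`; hence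
`P(Nd) = cᵢ · P(Nd \ {i})`. Since `cᵢ` only reads `xᵢ` and the parents, summing out the
coordinates of `Nd \ ({i} ∪ Pa)` also gives `P(xᵢ, pa) = cᵢ · P(pa)`. Both sides of the claimed
identity are then `cᵢ · P(Nd \ {i}) / P(pa)`.
-/

open Finset Function

def IsAncestral {ι : Type*} (E : ι → ι → Prop) (S : Finset ι) : Prop :=
  ∀ ⦃j k⦄, E k j → j ∈ S → k ∈ S

lemma exists_notMem_parents_mem {ι : Type*} [Fintype ι] {E : ι → ι → Prop}
    (hacyc : ∀ i, ¬ Relation.TransGen E i i) {S : Finset ι} (hS : S ≠ univ) :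
    ∃ m ∉ S, ∀ k, E k m → k ∈ S := by
  have : IsTrans ι (Relation.TransGen E) := ⟨fun _ _ _ => Relation.TransGen.trans⟩
  have : Std.Irrefl (Relation.TransGen E) := ⟨hacyc⟩
  obtain ⟨m₀, hm₀⟩ : ∃ m, m ∉ S := by simpa [eq_univ_iff_forall] using hS
  obtain ⟨m, hm, hmin⟩ := (Finite.wellFounded_of_trans_of_irrefl (Relation.TransGen E)).has_min
    {m | m ∉ S} ⟨m₀, hm₀⟩
  exact ⟨m, hm, fun k hkm => by_contra fun hk => hmin k hk (.single hkm)⟩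

section NonDesc

variable {ι : Type*} [Fintype ι] (E : ι → ι → Prop) [DecidableRel (Relation.TransGen E)]

lemma isAncestral_nonDesc (i : ι) : IsAncestral E (nonDesc E i) := by
  intro j k hkj hj
  simp only [nonDesc, mem_filter, mem_univ, true_and] at hj ⊢
  exact fun hik => hj (hik.tail hkj)

lemma isAncestral_nonDesc_erase [DecidableEq ι] (i : ι) :
    IsAncestral E ((nonDesc E i).erase i) := by
  intro j k hkj hj
  rw [mem_erase] at hj ⊢
  refine ⟨?_, isAncestral_nonDesc E i hkj hj.2⟩
  rintro rfl
  simp [nonDesc, Relation.TransGen.single hkj] at hj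

variable {E} (hacyc : ∀ i, ¬ Relation.TransGen E i i)
include hacyc

lemma mem_nonDesc_self (i : ι) : i ∈ nonDesc E i := by
  simp [nonDesc, hacyc i]

lemma parents_subset_nonDesc_erase [DecidableEq ι] [DecidableRel E] (i : ι) :
    parents E i ⊆ (nonDesc E i).erase i := by
  intro j hj
  have hji : E j i := by simpa [parents] using hj
  simp only [mem_erase, nonDesc, mem_filter, mem_univ, true_and]
  exact ⟨by rintro rfl; exact hacyc j (.single hji), fun hij => hacyc i (hij.tail hji)⟩

end NonDesc

lemma channel_update_of_not_parent {ι : Type*} [DecidableEq ι] {X : ι → Type*}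
    {E : ι → ι → Prop} {c : (i : ι) → (∀ j, X j) → X i → ℝ≥0}
    (hloc : ∀ i (v v' : ∀ j, X j), (∀ j, E j i → v j = v' j) → c i v = c i v')
    {j m : ι} (hm : ¬ E m j) (v : ∀ j, X j) (x : X m) :
    c j (update v m x) = c j v :=
  hloc j _ _ fun k hkj => update_of_ne (fun (hkm : k = m) => hm (hkm ▸ hkj)) x v

section Margin

variable {ι : Type*} [Fintype ι] [DecidableEq ι] {X : ι → Type*}
  [∀ i, Fintype (X i)] [∀ i, DecidableEq (X i)] (P : (∀ j, X j) → ℝ≥0)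

lemma margin_univ (v : ∀ j, X j) : margin P univ v = P v := by
  simp [margin, ← funext_iff]

lemma margin_eq_sum_margin_insert {T : Finset ι} {m : ι} (hm : m ∉ T) (v : ∀ j, X j) :
    margin P T v = ∑ x : X m, margin P (insert m T) (update v m x) := by
  have key : ∀ (x : X m) (w : ∀ j, X j), (∀ j ∈ insert m T, w j = update v m x j) ↔
      (x = w m ∧ ∀ j ∈ T, w j = v j) := by
    intro x w
    rw [forall_mem_insert, update_self, eq_comm]
    refine and_congr_right' (forall₂_congr fun j hj => ?_)
    rw [update_of_ne (ne_of_mem_of_not_mem hj hm)]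
  simp only [margin, key, ite_and]
  rw [sum_comm]
  simp

/-- Sum out the coordinates of `D` one at a time; `f` is constant along each of them. -/
lemma margin_insert_eq_mul_of_union {f : (∀ j, X j) → ℝ≥0} {i : ι} {T D : Finset ι}
    (hiD : i ∉ D) (hf : ∀ m ∈ D, ∀ w x, f (update w m x) = f w)
    (h : ∀ w, margin P (insert i (D ∪ T)) w = f w * margin P (D ∪ T) w) :
    ∀ w, margin P (insert i T) w = f w * margin P T w := by
  induction D using Finset.induction_on with
  | empty => simpa using h
  | insert m D hmD ih =>
    rw [mem_insert, not_or] at hiD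
    refine ih hiD.2 (fun k hk => hf k (mem_insert_of_mem hk)) fun w => ?_
    rw [insert_union] at h
    by_cases hmT : m ∈ D ∪ T
    · simpa [insert_eq_of_mem hmT] using h w
    have hmiT : m ∉ insert i (D ∪ T) := by simp [Ne.symm hiD.1, hmT]
    rw [margin_eq_sum_margin_insert P hmiT, margin_eq_sum_margin_insert P hmT, mul_sum]
    refine sum_congr rfl fun x _ => ?_
    rw [insert_comm, h, hf m (mem_insert_self m D)]

variable {E : ι → ι → Prop} {c : (i : ι) → (∀ j, X j) → X i → ℝ≥0}
  (hloc : ∀ i (v v' : ∀ j, X j), (∀ j, E j i → v j = v' j) → c i v = c i v')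
include hloc

variable (hacyc : ∀ i, ¬ Relation.TransGen E i i)
  (hchan : ∀ i (v : ∀ j, X j), ∑ x : X i, c i v x = 1)
  (hP : ∀ v, P v = ∏ i, c i v (v i))
include hacyc hchan hP

/-- Adding a vertex whose parents are already present contributes a channel, which sums to
one. -/
lemma margin_of_isAncestral {S : Finset ι} (hS : IsAncestral E S) (v : ∀ j, X j) :
    margin P S v = ∏ j ∈ S, c j v (v j) := by
  induction S using WellFoundedGT.induction generalizing v with
  | _ S ih =>
    by_cases hSu : S = univ
    · rw [hSu, margin_univ, hP]
    obtain ⟨m, hmS, hpa⟩ := exists_notMem_parents_mem hacyc hSu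
    have hS' : IsAncestral E (insert m S) := by
      intro j k hkj hj
      rcases mem_insert.mp hj with rfl | hj
      exacts [mem_insert_of_mem (hpa k hkj), mem_insert_of_mem (hS hkj hj)]
    have hnot : ∀ j ∈ insert m S, ¬ E m j := by
      intro j hj hmj
      rcases mem_insert.mp hj with rfl | hj
      exacts [hmS (hpa _ hmj), hmS (hS hmj hj)]
    rw [margin_eq_sum_margin_insert P hmS]
    calc ∑ x, margin P (insert m S) (update v m x)
        = ∑ x, c m v x * ∏ j ∈ S, c j v (v j) := by
          refine sum_congr rfl fun x _ => ?_
          rw [ih _ (ssubset_insert hmS) hS', prod_insert hmS, update_self,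
            channel_update_of_not_parent hloc (hnot m (mem_insert_self m S))]
          refine congrArg _ (prod_congr rfl fun j hj => ?_)
          rw [channel_update_of_not_parent hloc (hnot j (mem_insert_of_mem hj)),
            update_of_ne (ne_of_mem_of_not_mem hj hmS)]
      _ = ∏ j ∈ S, c j v (v j) := by rw [← sum_mul, hchan, one_mul]

end Margin

/-- Local Markov property from factorisation: if the joint distribution `P` on
`∏ i, X i` factorises as `P(v) = ∏ i, cᵢ(vᵢ | pa_i(v))` over a DAG with edge relation
`E`, where each `cᵢ` is a probability channel depending only on the parents of `i`, then
each `Xᵢ` is conditionally independent of its nondescendants-excluding-parents given its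
parents, with conditional independence expressed via ratios of marginals (division by
zero giving zero, as in `ℝ≥0`). -/
theorem local_markov_of_factorisation {ι : Type*} [Fintype ι] [DecidableEq ι]
    (E : ι → ι → Prop) [DecidableRel E] [DecidableRel (Relation.TransGen E)]
    (hacyc : ∀ i, ¬ Relation.TransGen E i i)
    (X : ι → Type*) [∀ i, Fintype (X i)] [∀ i, DecidableEq (X i)]
    (c : (i : ι) → (∀ j, X j) → X i → ℝ≥0)
    (hloc : ∀ i (v v' : ∀ j, X j), (∀ j, E j i → v j = v' j) → c i v = c i v')
    (hchan : ∀ i (v : ∀ j, X j), ∑ x : X i, c i v x = 1)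
    (P : (∀ j, X j) → ℝ≥0)
    (hP : ∀ v, P v = ∏ i, c i v (v i))
    (i : ι) :
    ∀ v : ∀ j, X j,
      margin P (insert i ((nonDesc E i \ insert i (parents E i)) ∪ parents E i)) v
          / margin P (parents E i) v
        = (margin P (insert i (parents E i)) v / margin P (parents E i) v)
          * (margin P ((nonDesc E i \ insert i (parents E i)) ∪ parents E i) v
              / margin P (parents E i) v) := by
  have hpa := parents_subset_nonDesc_erase hacyc i
  have hunion :
      (nonDesc E i \ insert i (parents E i)) ∪ parents E i = (nonDesc E i).erase i := by
    rw [sdiff_insert, ← erase_sdiff_comm, sdiff_union_of_subset hpa]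
  have hnd : ∀ w, margin P (insert i ((nonDesc E i).erase i)) w
      = c i w (w i) * margin P ((nonDesc E i).erase i) w := fun w => by
    rw [insert_erase (mem_nonDesc_self hacyc i),
      margin_of_isAncestral P hloc hacyc hchan hP (isAncestral_nonDesc E i),
      margin_of_isAncestral P hloc hacyc hchan hP (isAncestral_nonDesc_erase E i),
      ← mul_prod_erase _ _ (mem_nonDesc_self hacyc i)]
  have hpa_mul : ∀ w,
      margin P (insert i (parents E i)) w = c i w (w i) * margin P (parents E i) w :=
    margin_insert_eq_mul_of_union P (D := nonDesc E i \ insert i (parents E i)) (by simp)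
      (fun m hm w x => by
        simp only [mem_sdiff, mem_insert, not_or] at hm
        rw [update_of_ne (Ne.symm hm.2.1),
          channel_update_of_not_parent hloc (by simpa [parents] using hm.2.2)])
      (by rw [hunion]; exact hnd)
  intro v
  rw [hunion, hnd, hpa_mul]
  by_cases hd : margin P (parents E i) v = 0
  · simp [hd]
  · rw [mul_div_cancel_right₀ _ hd, mul_div_assoc]
end

section
/- Existence of functional dilations: every channel c : X → Y in FStoch (finite stochastic matrices: Σ_y c(y|x) = 1 for all x) admits a functional dilation: there exists a finite set U, a probability distribution λ on U, and a function f : X × U → Y such that c(y|x) = Σ_{u : f(x,u) = y} λ(u) for all x, y. -/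
open scoped NNReal

theorem key_sum {X Y : Type*} [Fintype X] [Fintype Y] [DecidableEq X] [DecidableEq Y]
    (c : X → Y → ℝ≥0) (hc : ∀ x, ∑ y, c x y = 1) (x : X) (y : Y) :
    c x y = ∑ g : X → Y, if g x = y then ∏ x', c x' (g x') else 0 := by
  set d : X → Y → ℝ≥0 := fun x' z => if x' = x then (if z = y then c x y else 0) else c x' z
    with hdd
  have h2 : (∏ x', ∑ z, d x' z) = ∑ g : X → Y, ∏ x', d x' (g x') := by
    rw [Finset.prod_univ_sum, Fintype.piFinset_univ]
  have h1 : ∀ g : X → Y, (∏ x', d x' (g x')) = if g x = y then ∏ x', c x' (g x') else 0 := by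
    intro g
    by_cases h : g x = y
    · simp only [h, if_true]
      refine Finset.prod_congr rfl fun x' _ => ?_
      by_cases hx : x' = x <;> simp [hdd, hx, h]
    · simp only [h, if_false]
      apply Finset.prod_eq_zero (Finset.mem_univ x)
      simp [hdd, h]
  have h3 : (∏ x', ∑ z, d x' z) = c x y := by
    rw [Finset.prod_congr rfl (fun x' _ => ?_) (g := fun x' => if x' = x then c x y else 1)]
    · simp
    · by_cases hx : x' = x <;> simp [hdd, hx, hc]
  rw [← Finset.sum_congr rfl fun g _ => h1 g, ← h2, h3]

/-- Existence of functional dilations: every channel `c : X → Y` in `FStoch` (finite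
stochastic matrices) factors as a deterministic function `f : X × U → Y` applied to an
extra noise variable `U` with distribution `λ`:
`c(y|x) = Σ_{u : f(x,u) = y} λ(u)`. -/
theorem exists_functional_dilation {X Y : Type*} [Fintype X] [Fintype Y]
    [Nonempty X] [Nonempty Y] [DecidableEq Y]
    (c : X → Y → ℝ≥0) (hc : ∀ x, ∑ y, c x y = 1) :
    ∃ (U : Type) (fU : Fintype U) (lam : U → ℝ≥0) (f : X → U → Y),
      (∑ u ∈ @Finset.univ U fU, lam u) = 1 ∧
        ∀ x y, c x y = ∑ u ∈ @Finset.univ U fU, if f x u = y then lam u else 0 := by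
  classical
  set e := Fintype.equivFin (X → Y)
  refine ⟨Fin (Fintype.card (X → Y)), inferInstance, fun u => ∏ x, c x (e.symm u x),
    fun x u => e.symm u x, ?_, ?_⟩
  · have h2 : (∏ x, ∑ y, c x y) = ∑ g : X → Y, ∏ x, c x (g x) := by
      rw [Finset.prod_univ_sum, Fintype.piFinset_univ]
    refine (e.symm.sum_comp (fun g => ∏ x, c x (g x))).trans ?_
    rw [← h2]; simp [hc]
  · intro x y
    exact (key_sum c hc x y).trans
      (e.symm.sum_comp (fun g => if g x = y then ∏ x', c x' (g x') else 0)).symm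
end

section
/- Trimming is well-defined and unique: let c : A₁ × ⋯ × Aₙ → Y be a channel in FStoch with all Aᵢ nonempty. Say the output of c is independent of a subset T ⊆ {1,…,n} if c factors as c(y | a) = d(y | a_{T^c}) for some channel d depending only on the coordinates outside T. Then there is a unique maximal such subset T (namely the union of all singletons {i} of which the output is independent), and the induced channel d = trim(c) on the remaining inputs is faithful, i.e. its output is not independent of any nonempty subset of its inputs. -/
open scoped NNReal

/-- Trimming is well-defined and unique: for a channel `c : ∏ i, A i → Y` in `FStoch`
with all `A i` nonempty, say the output of `c` is independent of a set `T` of inputs when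
`c` does not vary in the coordinates in `T`. Then `T₀`, the union of all singletons of
which the output is independent, is itself such a set; it is the unique maximal one; and
the trimmed channel is faithful, i.e. the output is not independent of any nonempty set
of the remaining inputs. -/
theorem trim_wellDefined_unique_faithful {ι Y : Type*} [Fintype ι] [Fintype Y]
    (A : ι → Type*) [∀ i, Fintype (A i)] [∀ i, Nonempty (A i)]
    (c : (∀ i, A i) → Y → ℝ≥0) (hc : ∀ v, ∑ y, c v y = 1) :
    letI Indep : Set ι → Prop :=
      fun T => ∀ v w : ∀ i, A i, (∀ j, j ∉ T → v j = w j) → c v = c w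
    letI T₀ : Set ι := {i | Indep {i}}
    Indep T₀
      ∧ (∀ T, Indep T → T ⊆ T₀)
      ∧ (∀ T, Indep T → (∀ T', Indep T' → T' ⊆ T) → T = T₀)
      ∧ (∀ S : Set ι, S ⊆ T₀ᶜ → S.Nonempty → ¬ Indep S) := by
  classical
  set Indep : Set ι → Prop :=
    fun T => ∀ v w : ∀ i, A i, (∀ j, j ∉ T → v j = w j) → c v = c w with hIdef
  set T₀ : Set ι := {i | Indep {i}} with hT₀def
  show Indep T₀ ∧ (∀ T, Indep T → T ⊆ T₀)
      ∧ (∀ T, Indep T → (∀ T', Indep T' → T' ⊆ T) → T = T₀)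
      ∧ (∀ S : Set ι, S ⊆ T₀ᶜ → S.Nonempty → ¬ Indep S)
  -- key: changing coordinates one at a time
  have key : ∀ s : Finset ι, ∀ v w : ∀ i, A i,
      (∀ j, v j ≠ w j → j ∈ s) → (∀ j, v j ≠ w j → Indep {j}) → c v = c w := by
    intro s
    induction s using Finset.induction_on with
    | empty =>
      intro v w hs _
      have : v = w := funext fun j => by_contra fun h => Finset.notMem_empty j (hs j h)
      rw [this]
    | @insert a s ha ih =>
      intro v w hs hT
      set v' := Function.update v a (w a) with hv'
      have h1 : c v = c v' := by
        by_cases hva : v a = w a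
        · have : v' = v := by
            funext j
            by_cases hj : j = a
            · subst hj; simp [hv', hva]
            · simp [hv', Function.update_of_ne hj]
          rw [this]
        · exact hT a hva v v' (fun j hj => by
            have : j ≠ a := fun h => hj (h ▸ rfl)
            simp [hv', Function.update_of_ne this])
      have h2 : c v' = c w := by
        apply ih
        · intro j hj
          by_cases hja : j = a
          · subst hja; exact absurd (by simp [hv']) hj
          · have : v j ≠ w j := by simpa [hv', Function.update_of_ne hja] using hj
            have := hs j this
            simp at this
            tauto
        · intro j hj
          by_cases hja : j = a
          · subst hja; exact absurd (by simp [hv']) hj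
          · have : v j ≠ w j := by simpa [hv', Function.update_of_ne hja] using hj
            exact hT j this
      rw [h1, h2]
  have hIndepT₀ : Indep T₀ := by
    intro v w h
    refine key Finset.univ v w (fun j _ => Finset.mem_univ j) (fun j hj => ?_)
    by_contra hnot
    exact hj (h j hnot)
  -- monotonicity: Indep T and T' ⊆ T imply Indep T'
  have mono : ∀ T T' : Set ι, Indep T → T' ⊆ T → Indep T' := by
    intro T T' hT hsub v w h
    exact hT v w fun j hj => h j fun hjT' => hj (hsub hjT')
  have hmax : ∀ T, Indep T → T ⊆ T₀ := by
    intro T hT i hi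
    exact mono T {i} hT (by simpa using hi)
  refine ⟨hIndepT₀, hmax, ?_, ?_⟩
  · intro T hT hmaxT
    exact le_antisymm (hmax T hT) (hmaxT T₀ hIndepT₀)
  · intro S hS ⟨i, hi⟩ hIndepS
    have : Indep {i} := mono S {i} hIndepS (by simpa using hi)
    exact hS hi this
end
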